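/- arXiv:2211.10153 — 2 statements merged into one kernel-verified Lean document; each statement's English description precedes it below -/
import Mathlib

section
/- Let m, n be positive integers and let A_1,…,A_m, B_1,…,B_n, a_1,…,a_m, b_1,…,b_n be positive real numbers. Define L(H) = Σ_{i=1}^m A_i H^{a_i} + Σ_{j=1}^n B_j H^{−b_j}. If H_1 ≤ H_2 are positive reals, then there exists ℋ with H_1 ≤ ℋ ≤ H_2 such that L(ℋ) ≤ C ( Σ_{i=1}^m A_i H_1^{a_i} + Σ_{j=1}^n B_j H_2^{−b_j} + Σ_{i=1}^m Σ_{j=1}^n (A_i^{b_j} B_j^{a_i})^{1/(a_i+b_j)} ), where C > 0 is a constant depending only on m and n. -/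
open Real Finset

theorem srinivasan_lemma (m n : ℕ) (hm : 0 < m) (hn : 0 < n) :
    ∃ C : ℝ, 0 < C ∧
      ∀ (A a : Fin m → ℝ) (B b : Fin n → ℝ),
        (∀ i, 0 < A i) → (∀ i, 0 < a i) → (∀ j, 0 < B j) → (∀ j, 0 < b j) →
        ∀ H₁ H₂ : ℝ, 0 < H₁ → H₁ ≤ H₂ →
          ∃ H : ℝ, H₁ ≤ H ∧ H ≤ H₂ ∧
            (∑ i, A i * H ^ (a i)) + (∑ j, B j * H ^ (-(b j)))
              ≤ C * ((∑ i, A i * H₁ ^ (a i)) + (∑ j, B j * H₂ ^ (-(b j)))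
                + ∑ i, ∑ j, ((A i) ^ (b j) * (B j) ^ (a i)) ^ (1 / (a i + b j))) := by
  haveI : Nonempty (Fin m) := Fin.pos_iff_nonempty.mp hm
  haveI : Nonempty (Fin n) := Fin.pos_iff_nonempty.mp hn
  refine ⟨(m + n : ℝ), by positivity, ?_⟩
  intro A a B b hA ha hB hb H₁ H₂ hH₁ h12
  have hH₂ : 0 < H₂ := hH₁.trans_le h12
  have logid : ∀ x y : ℝ, 0 < x → 0 < y → Real.log x = Real.log y → x = y := by
    intro x y hx hy h
    rw [← Real.exp_log hx, ← Real.exp_log hy, h]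
  set v : Fin m → Fin n → ℝ := fun i j => (A i ^ b j * B j ^ a i) ^ (1 / (a i + b j)) with hv
  set Hc : Fin m → Fin n → ℝ := fun i j => (B j / A i) ^ (1 / (a i + b j)) with hHc
  have hs : ∀ (i : Fin m) (j : Fin n), 0 < a i + b j := fun i j => add_pos (ha i) (hb j)
  have hHcpos : ∀ i j, 0 < Hc i j := fun i j => rpow_pos_of_pos (div_pos (hB j) (hA i)) _
  have hvpos : ∀ i j, 0 < v i j :=
    fun i j => rpow_pos_of_pos (mul_pos (rpow_pos_of_pos (hA i) _) (rpow_pos_of_pos (hB j) _)) _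
  have logv : ∀ i j, Real.log (v i j)
      = (1 / (a i + b j)) * (b j * Real.log (A i) + a i * Real.log (B j)) := by
    intro i j
    simp only [hv]
    rw [Real.log_rpow (mul_pos (rpow_pos_of_pos (hA i) _) (rpow_pos_of_pos (hB j) _)),
      Real.log_mul (rpow_pos_of_pos (hA i) _).ne' (rpow_pos_of_pos (hB j) _).ne',
      Real.log_rpow (hA i), Real.log_rpow (hB j)]
  have logHc : ∀ i j, Real.log (Hc i j)
      = (1 / (a i + b j)) * (Real.log (B j) - Real.log (A i)) := by
    intro i j
    simp only [hHc]
    rw [Real.log_rpow (div_pos (hB j) (hA i)), Real.log_div (hB j).ne' (hA i).ne']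
  have key1 : ∀ i j, A i * Hc i j ^ a i = v i j := by
    intro i j
    apply logid _ _ (mul_pos (hA i) (rpow_pos_of_pos (hHcpos i j) _)) (hvpos i j)
    rw [Real.log_mul (hA i).ne' (rpow_pos_of_pos (hHcpos i j) _).ne',
      Real.log_rpow (hHcpos i j), logHc, logv]
    have : a i + b j ≠ 0 := (hs i j).ne'
    field_simp
    ring
  have key2 : ∀ i j, B j * Hc i j ^ (-(b j)) = v i j := by
    intro i j
    apply logid _ _ (mul_pos (hB j) (rpow_pos_of_pos (hHcpos i j) _)) (hvpos i j)
    rw [Real.log_mul (hB j).ne' (rpow_pos_of_pos (hHcpos i j) _).ne',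
      Real.log_rpow (hHcpos i j), logHc, logv]
    have : a i + b j ≠ 0 := (hs i j).ne'
    field_simp
    ring
  -- the double sum and its term bounds
  set S₃ : ℝ := ∑ i, ∑ j, v i j with hS₃
  have hvle : ∀ i j, v i j ≤ S₃ := by
    intro i j
    calc v i j ≤ ∑ j', v i j' :=
          Finset.single_le_sum (fun j' _ => (hvpos i j').le) (mem_univ j)
      _ ≤ S₃ := Finset.single_le_sum
          (fun i' _ => Finset.sum_nonneg fun j' _ => (hvpos i' j').le) (mem_univ i)
  -- choose T
  set Tj : Fin n → ℝ := fun j => Finset.univ.inf' univ_nonempty (fun i => Hc i j) with hTj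
  set T : ℝ := Finset.univ.sup' univ_nonempty Tj with hT
  set H : ℝ := max H₁ (min H₂ T) with hH
  have hHlb : H₁ ≤ H := le_max_left _ _
  have hHub : H ≤ H₂ := max_le h12 (min_le_left _ _)
  have hHpos : 0 < H := lt_of_lt_of_le hH₁ hHlb
  refine ⟨H, hHlb, hHub, ?_⟩
  -- per-term bounds
  have boundA : ∀ i, A i * H ^ a i ≤ A i * H₁ ^ a i + S₃ := by
    intro i
    rcases le_or_gt (min H₂ T) H₁ with hc | hc
    · have : H = H₁ := max_eq_left hc
      rw [this]
      have : (0:ℝ) ≤ S₃ := le_trans (hvpos i (Classical.arbitrary _)).le (hvle i _)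
      linarith
    · have hHT : H ≤ T := by
        rw [hH, max_eq_right hc.le]
        exact min_le_right _ _
      obtain ⟨j, -, hj⟩ := Finset.exists_mem_eq_sup' univ_nonempty Tj
      have hTle : T ≤ Hc i j := by
        rw [hT, hj, hTj]
        exact Finset.inf'_le _ (mem_univ i)
      have : A i * H ^ a i ≤ v i j := by
        rw [← key1 i j]
        exact mul_le_mul_of_nonneg_left
          (Real.rpow_le_rpow hHpos.le (hHT.trans hTle) (ha i).le) (hA i).le
      have h2 : (0:ℝ) ≤ A i * H₁ ^ a i :=
        (mul_pos (hA i) (Real.rpow_pos_of_pos hH₁ _)).le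
      linarith [hvle i j]
  have boundB : ∀ j, B j * H ^ (-(b j)) ≤ B j * H₂ ^ (-(b j)) + S₃ := by
    intro j
    rcases le_or_gt H₂ T with hc | hc
    · have : H = H₂ := by
        rw [hH, min_eq_left hc, max_eq_right h12]
      rw [this]
      have : (0:ℝ) ≤ S₃ := le_trans (hvpos (Classical.arbitrary _) j).le (hvle _ j)
      linarith
    · have hTH : T ≤ H := by
        rw [hH, min_eq_right hc.le]
        exact le_max_right _ _
      obtain ⟨i, -, hi⟩ := Finset.exists_mem_eq_inf' univ_nonempty (fun i => Hc i j)
      have hle : Hc i j ≤ H := by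
        refine le_trans ?_ hTH
        rw [hT]
        refine le_trans ?_ (Finset.le_sup' Tj (mem_univ j))
        simp only [hTj]
        exact hi.ge
      have : B j * H ^ (-(b j)) ≤ v i j := by
        rw [← key2 i j]
        exact mul_le_mul_of_nonneg_left
          (Real.rpow_le_rpow_of_nonpos (hHcpos i j) hle (neg_nonpos.mpr (hb j).le)) (hB j).le
      have h2 : (0:ℝ) ≤ B j * H₂ ^ (-(b j)) :=
        (mul_pos (hB j) (Real.rpow_pos_of_pos hH₂ _)).le
      linarith [hvle i j]
  -- sum up
  set S₁ : ℝ := ∑ i, A i * H₁ ^ a i with hS₁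
  set S₂ : ℝ := ∑ j, B j * H₂ ^ (-(b j)) with hS₂
  have hS₁nn : 0 ≤ S₁ := Finset.sum_nonneg fun i _ =>
    (mul_pos (hA i) (Real.rpow_pos_of_pos hH₁ _)).le
  have hS₂nn : 0 ≤ S₂ := Finset.sum_nonneg fun j _ =>
    (mul_pos (hB j) (Real.rpow_pos_of_pos hH₂ _)).le
  have hS₃nn : 0 ≤ S₃ := Finset.sum_nonneg fun i _ =>
    Finset.sum_nonneg fun j _ => (hvpos i j).le
  have hsum1 : (∑ i, A i * H ^ a i) ≤ S₁ + m * S₃ := by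
    calc (∑ i, A i * H ^ a i) ≤ ∑ i, (A i * H₁ ^ a i + S₃) :=
          Finset.sum_le_sum fun i _ => boundA i
      _ = S₁ + m * S₃ := by
          rw [Finset.sum_add_distrib, Finset.sum_const, card_univ, Fintype.card_fin,
            nsmul_eq_mul]
  have hsum2 : (∑ j, B j * H ^ (-(b j))) ≤ S₂ + n * S₃ := by
    calc (∑ j, B j * H ^ (-(b j))) ≤ ∑ j, (B j * H₂ ^ (-(b j)) + S₃) :=
          Finset.sum_le_sum fun j _ => boundB j
      _ = S₂ + n * S₃ := by
          rw [Finset.sum_add_distrib, Finset.sum_const, card_univ, Fintype.card_fin,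
            nsmul_eq_mul]
  have hmn : (1:ℝ) ≤ (m:ℝ) + n := by
    have : (1:ℝ) ≤ (m:ℝ) := by exact_mod_cast hm
    have : (0:ℝ) ≤ (n:ℝ) := Nat.cast_nonneg n
    linarith
  calc (∑ i, A i * H ^ a i) + (∑ j, B j * H ^ (-(b j)))
      ≤ S₁ + S₂ + ((m:ℝ) + n) * S₃ := by linarith
    _ ≤ ((m:ℝ) + n) * (S₁ + S₂ + S₃) := by nlinarith
end

section
/- Let z ≥ 1 be a real number and k ≥ 1 an integer. Then for every positive integer n ≤ 2z^k, Λ(n) = Σ_{j=1}^{k} (−1)^{j−1} C(k,j) Σ_{n_1 n_2 ⋯ n_{2j} = n, n_{j+1} ≤ z, …, n_{2j} ≤ z} (log n_1) μ(n_{j+1}) ⋯ μ(n_{2j}), where the inner sum runs over all 2j-tuples of positive integers (n_1,…,n_{2j}) with product n such that each of n_{j+1},…,n_{2j} is at most z. -/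
open Classical ArithmeticFunction ArithmeticFunction.Moebius Finset
open scoped ArithmeticFunction.zeta

/-!
Let `μ_{≤z}` be the Möbius function cut off above `z` and `x = ζ * μ_{≤z}`. On `[1, z]` the
cut-off is invisible, so `x` agrees there with `ζ * μ = 1`: the function `1 - x` is supported on
`(z, ∞)`, hence `(1 - x)^k` on `(z^k, ∞)`, and since `Λ` is supported on `[2, ∞)`, the product
`Λ * (1 - x)^k` vanishes up to `2 z^k`. Expanding `Λ = Λ * (1 - x)^k + Λ * (1 - (1 - x)^k)` by the
binomial theorem and using `Λ * ζ = log` gives `Λ = Σ_j (-1)^{j-1} C(k,j) log * ζ^{j-1} * μ_{≤z}^j`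
on `[1, 2 z^k]`, and the value of this `2j`-fold Dirichlet product at `n` is the divisor sum of
the statement.
-/

theorem one_sub_one_sub_pow {R A : Type*} [CommRing R] [CommRing A] [Algebra R A] (x : A)
    (k : ℕ) : 1 - (1 - x) ^ k = ∑ j ∈ range k, ((-1) ^ j * k.choose (j + 1) : R) • x ^ (j + 1) := by
  rw [sub_eq_neg_add 1 x, add_pow, sum_range_succ']
  simp only [pow_zero, one_pow, one_mul, Nat.choose_zero_right, Nat.cast_one, sub_add_cancel_right,
    ← sum_neg_distrib]
  refine sum_congr rfl fun j _ => ?_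
  simp only [Algebra.smul_def, map_mul, map_pow, map_neg, map_one, map_natCast]
  ring

theorem Nat.finMulAntidiag_eq_filter_piFinset_Icc (d n : ℕ) :
    Nat.finMulAntidiag d n = {v ∈ Fintype.piFinset fun _ : Fin d => Icc 1 n | ∏ i, v i = n} := by
  ext v
  simp only [Nat.mem_finMulAntidiag, mem_filter, Fintype.mem_piFinset, mem_Icc]
  constructor
  · intro hv
    refine ⟨fun i => ⟨Nat.one_le_iff_ne_zero.mpr ?_, Nat.le_of_dvd ?_ ?_⟩, hv.1⟩
    · exact Nat.ne_zero_of_mem_finMulAntidiag (Nat.mem_finMulAntidiag.mpr hv) i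
    · exact Nat.pos_of_ne_zero hv.2
    · exact Nat.dvd_of_mem_finMulAntidiag (Nat.mem_finMulAntidiag.mpr hv) i
  · rintro ⟨hv, hprod⟩
    refine ⟨hprod, ?_⟩
    rw [← hprod]
    exact prod_ne_zero_iff.mpr fun i _ => Nat.one_le_iff_ne_zero.mp (hv i).1

namespace ArithmeticFunction

variable {R : Type*}

protected theorem sub_apply [AddGroup R] (f g : ArithmeticFunction R) (n : ℕ) :
    (f - g) n = f n - g n := by
  rw [sub_eq_add_neg, add_apply, neg_apply, sub_eq_add_neg]

protected theorem sum_apply [AddCommMonoid R] {ι : Type*} (s : Finset ι)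
    (f : ι → ArithmeticFunction R) (n : ℕ) : (∑ i ∈ s, f i) n = ∑ i ∈ s, f i n :=
  map_sum (⟨⟨fun f : ArithmeticFunction R => f n, rfl⟩, fun _ _ => rfl⟩ :
    ArithmeticFunction R →+ R) f s

protected theorem prod_apply [CommSemiring R] (d : ℕ) (f : Fin d → ArithmeticFunction R) (n : ℕ) :
    (∏ i, f i) n = ∑ v ∈ Nat.finMulAntidiag d n, ∏ i, f i (v i) := by
  induction d generalizing n with
  | zero =>
    rcases eq_or_ne n 1 with rfl | hn
    · simp [Nat.finMulAntidiag_one]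
    · simp [Nat.finMulAntidiag_zero_left hn, one_apply_ne hn]
  | succ d ih =>
    rw [Fin.prod_univ_succ, mul_apply]
    simp_rw [ih, mul_sum, Fin.prod_univ_succ]
    rw [sum_sigma']
    refine sum_nbij' (fun p => Fin.cons p.1.1 p.2) (fun v => ⟨(v 0, ∏ i, Fin.tail v i), Fin.tail v⟩)
      ?_ ?_ ?_ ?_ ?_
    · rintro ⟨⟨a, b⟩, v⟩ h
      simp only [mem_sigma, Nat.mem_divisorsAntidiagonal, Nat.mem_finMulAntidiag] at h ⊢
      simp [Fin.prod_univ_succ, h.2.1, h.1.1, h.1.2]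
    · intro v h
      simp only [mem_sigma, Nat.mem_divisorsAntidiagonal, Nat.mem_finMulAntidiag] at h ⊢
      rw [Fin.prod_univ_succ] at h
      exact ⟨h, trivial, right_ne_zero_of_mul (h.1 ▸ h.2 : v 0 * _ ≠ 0)⟩
    · rintro ⟨⟨a, b⟩, v⟩ h
      simp only [mem_sigma, Nat.mem_divisorsAntidiagonal, Nat.mem_finMulAntidiag] at h
      simp [Fin.tail, h.2.1]
    · exact fun v _ => Fin.cons_self_tail v
    · rintro ⟨⟨a, b⟩, v⟩ _
      simp

theorem lt_of_mul_apply_ne_zero [Semiring R] {f g : ArithmeticFunction R} {a b : ℝ} (hb : 0 ≤ b)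
    (hf : ∀ m, f m ≠ 0 → a ≤ m) (hg : ∀ m, g m ≠ 0 → b < m) {m : ℕ} (h : (f * g) m ≠ 0) :
    a * b < m := by
  rw [mul_apply] at h
  obtain ⟨⟨d, e⟩, hde, hne⟩ := exists_ne_zero_of_sum_ne_zero h
  have hd : f d ≠ 0 := left_ne_zero_of_mul hne
  have he : g e ≠ 0 := right_ne_zero_of_mul hne
  have hd0 : (0 : ℝ) < d := by
    exact_mod_cast Nat.pos_of_ne_zero fun h0 => hd (by rw [h0, map_zero])
  rw [← (Nat.mem_divisorsAntidiagonal.mp hde).1, Nat.cast_mul]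
  calc a * b ≤ d * b := mul_le_mul_of_nonneg_right (hf d hd) hb
    _ < d * e := mul_lt_mul_of_pos_left (hg e he) hd0

theorem pow_lt_of_pow_apply_ne_zero [Semiring R] {f : ArithmeticFunction R} {a : ℝ} (ha : 0 ≤ a)
    (hf : ∀ m, f m ≠ 0 → a < m) {k : ℕ} (hk : k ≠ 0) {m : ℕ} (h : (f ^ k) m ≠ 0) :
    a ^ k < m := by
  induction k generalizing m with
  | zero => exact absurd rfl hk
  | succ k ih =>
    rcases eq_or_ne k 0 with rfl | hk
    · simpa using hf m (by simpa using h)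
    rw [pow_succ'] at h
    rw [pow_succ']
    exact lt_of_mul_apply_ne_zero (pow_nonneg ha k) (fun m hm => (hf m hm).le) (fun _ => ih hk) h

theorem two_le_of_vonMangoldt_ne_zero {m : ℕ} (h : Λ m ≠ 0) : 2 ≤ m := by
  have h0 : m ≠ 0 := by rintro rfl; exact h map_zero
  have h1 : m ≠ 1 := by rintro rfl; exact h vonMangoldt_apply_one
  omega

end ArithmeticFunction

noncomputable def truncatedMoebius (z : ℝ) : ArithmeticFunction ℝ :=
  ⟨fun m => if (m : ℝ) ≤ z then (μ m : ℝ) else 0, by simp⟩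

theorem truncatedMoebius_apply (z : ℝ) (m : ℕ) :
    truncatedMoebius z m = if (m : ℝ) ≤ z then (μ m : ℝ) else 0 := rfl

theorem lt_of_one_sub_zeta_mul_truncatedMoebius_apply_ne_zero {z : ℝ} {m : ℕ}
    (h : (1 - ζ * truncatedMoebius z) m ≠ 0) : z < m := by
  by_contra! hm
  apply h
  have htrunc : ∀ d ∈ m.divisors, truncatedMoebius z d = (μ d : ℝ) := fun d hd =>
    if_pos ((Nat.cast_le.mpr (Nat.divisor_le hd)).trans hm)
  have hmoebius := congrArg (· m) (coe_zeta_mul_coe_moebius (R := ℝ))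
  simp only [coe_zeta_mul_apply, intCoe_apply] at hmoebius
  rw [ArithmeticFunction.sub_apply, coe_zeta_mul_apply, sum_congr rfl htrunc, hmoebius, sub_self]

/-- The `2(j+1)` factors of `log * ζ^j * μ_{≤z}^(j+1)`, indexed as the tuples of the identity:
`log` at position `0`, `ζ` at positions `1, …, j`, and `μ_{≤z}` at the last `j + 1`. -/
noncomputable def heathBrownFactor (z : ℝ) (j i : ℕ) : ArithmeticFunction ℝ :=
  if i = 0 then log else if i < j + 1 then ζ else truncatedMoebius z

theorem prod_heathBrownFactor (z : ℝ) (j : ℕ) :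
    ∏ i : Fin (2 * (j + 1)), heathBrownFactor z j i =
      log * ζ ^ j * truncatedMoebius z ^ (j + 1) := by
  have hzeta : ∀ i ∈ range j, heathBrownFactor z j (i + 1) = ζ := fun i hi => by
    simp [heathBrownFactor, mem_range.mp hi]
  have hmoebius : ∀ i ∈ Ico (j + 1) (2 * (j + 1)), heathBrownFactor z j i = truncatedMoebius z :=
    fun i hi => by
      have := (mem_Ico.mp hi).1
      rw [heathBrownFactor, if_neg (by omega), if_neg (by omega)]
  rw [Fin.prod_univ_eq_prod_range (heathBrownFactor z j),
    ← prod_range_mul_prod_Ico _ (by omega : j + 1 ≤ 2 * (j + 1)), prod_range_succ',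
    prod_congr rfl hzeta, prod_congr rfl hmoebius, prod_const, prod_const, card_range,
    Nat.card_Ico, show 2 * (j + 1) - (j + 1) = j + 1 by omega]
  simp [heathBrownFactor, mul_comm]

theorem prod_heathBrownFactor_apply (z : ℝ) (j : ℕ) {v : Fin (2 * (j + 1)) → ℕ}
    (hv : ∀ i, v i ≠ 0) :
    ∏ i : Fin (2 * (j + 1)), heathBrownFactor z j i (v i) = Real.log (v ⟨0, by omega⟩) *
      ∏ i ∈ univ.filter (fun i : Fin (2 * (j + 1)) => j + 1 ≤ (i : ℕ)),
        truncatedMoebius z (v i) := by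
  have hsplit : ∀ i : Fin (2 * (j + 1)), heathBrownFactor z j i (v i) =
      (if i = ⟨0, by omega⟩ then Real.log (v i) else 1) *
        (if j + 1 ≤ (i : ℕ) then truncatedMoebius z (v i) else 1) := fun i => by
    rcases i with ⟨i, hi⟩
    by_cases h0 : i = 0
    · subst h0; simp [heathBrownFactor, log_apply]
    · by_cases hj : i < j + 1
      · simp [heathBrownFactor, h0, hj, Fin.ext_iff, hv, Nat.not_le.mpr hj]
      · simp [heathBrownFactor, h0, hj, Fin.ext_iff, Nat.le_of_not_lt hj]
  rw [prod_congr rfl fun i _ => hsplit i, prod_mul_distrib, Fintype.prod_ite_eq', prod_filter]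

theorem vonMangoldt_mul_one_sub_pow_apply_eq_zero {z : ℝ} (hz : 0 ≤ z) {k : ℕ} (hk : k ≠ 0)
    {n : ℕ} (hn : (n : ℝ) ≤ 2 * z ^ k) : (Λ * (1 - ζ * truncatedMoebius z) ^ k) n = 0 := by
  by_contra h
  have := lt_of_mul_apply_ne_zero (pow_nonneg hz k)
    (fun _ hm => Nat.ofNat_le_cast.mpr (two_le_of_vonMangoldt_ne_zero hm))
    (fun m => pow_lt_of_pow_apply_ne_zero hz
      (fun _ => lt_of_one_sub_zeta_mul_truncatedMoebius_apply_ne_zero) hk) h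
  linarith

theorem vonMangoldt_apply_eq_sum_choose {z : ℝ} (hz : 0 ≤ z) {k : ℕ} (hk : k ≠ 0) {n : ℕ}
    (hn : (n : ℝ) ≤ 2 * z ^ k) :
    Λ n = ∑ j ∈ range k,
      (-1) ^ j * k.choose (j + 1) * (Λ * (ζ * truncatedMoebius z) ^ (j + 1)) n := by
  set x := ζ * truncatedMoebius z
  have hsplit : Λ = Λ * (1 - x) ^ k +
      ∑ j ∈ range k, ((-1) ^ j * k.choose (j + 1) : ℝ) • (Λ * x ^ (j + 1)) := by
    simp_rw [← mul_smul_comm, ← mul_sum, ← one_sub_one_sub_pow, ← mul_add, add_sub_cancel, mul_one]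
  conv_lhs => rw [hsplit]
  rw [ArithmeticFunction.add_apply, vonMangoldt_mul_one_sub_pow_apply_eq_zero hz hk hn, zero_add,
    ArithmeticFunction.sum_apply]
  simp only [smul_map, smul_eq_mul]

theorem vonMangoldt_mul_pow_apply (z : ℝ) (j n : ℕ) :
    (Λ * (ζ * truncatedMoebius z) ^ (j + 1)) n =
      ∑ v ∈ (Fintype.piFinset fun _ : Fin (2 * (j + 1)) => Finset.Icc 1 n).filter
            (fun v => (∏ i, v i) = n ∧
              ∀ i : Fin (2 * (j + 1)), j + 1 ≤ (i : ℕ) → (v i : ℝ) ≤ z),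
          Real.log (v ⟨0, by omega⟩) *
            ∏ i ∈ Finset.univ.filter (fun i : Fin (2 * (j + 1)) => j + 1 ≤ (i : ℕ)),
              (μ (v i) : ℝ) := by
  have hfactor : Λ * (ζ * truncatedMoebius z) ^ (j + 1) =
      log * ζ ^ j * truncatedMoebius z ^ (j + 1) := by
    rw [← vonMangoldt_mul_zeta]; ring
  rw [hfactor, ← prod_heathBrownFactor, ArithmeticFunction.prod_apply, ← filter_filter,
    ← Nat.finMulAntidiag_eq_filter_piFinset_Icc, sum_filter]
  refine sum_congr rfl fun v hv => ?_
  simp only [prod_heathBrownFactor_apply z j (Nat.ne_zero_of_mem_finMulAntidiag hv),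
    truncatedMoebius_apply, prod_ite_zero, mem_filter, mem_univ, true_and, mul_ite, mul_zero]

theorem heath_brown_identity
    (z : ℝ) (hz : 1 ≤ z) (k : ℕ) (hk : 1 ≤ k) (n : ℕ)
    (hnz : (n : ℝ) ≤ 2 * z ^ k) :
    (Λ n : ℝ) =
      ∑ j ∈ Finset.range k, (-1 : ℝ) ^ j * (k.choose (j + 1) : ℝ) *
        ∑ v ∈ (Fintype.piFinset fun _ : Fin (2 * (j + 1)) => Finset.Icc 1 n).filter
            (fun v => (∏ i, v i) = n ∧
              ∀ i : Fin (2 * (j + 1)), j + 1 ≤ (i : ℕ) → (v i : ℝ) ≤ z),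
          Real.log (v ⟨0, by omega⟩) *
            ∏ i ∈ Finset.univ.filter (fun i : Fin (2 * (j + 1)) => j + 1 ≤ (i : ℕ)),
              (μ (v i) : ℝ) := by
  rw [vonMangoldt_apply_eq_sum_choose (by linarith) (by omega) hnz]
  simp only [vonMangoldt_mul_pow_apply]
end
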